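/- For η ∈ [1/2, 1] and N_S ≥ 0, the function N_S ↦ g(η·N_S) − g((1−η)·N_S) is monotone nondecreasing in N_S, where g(x) = (x+1)·log₂(x+1) − x·log₂(x) and g(0) = 0. -/

import Mathlib

/-!
In nats, `g' = log(x+1) − log x`, so
`N · d/dN [g(aN) − g(bN)] = m(aN) − m(bN)` with `m(x) = x log(x+1) − x log x`, and `m` is
nondecreasing because `log(1 + 1/x) ≥ 1/(x+1)`. Since `1 − η ≤ η`, the derivative of
`g(ηN) − g((1−η)N)` is nonnegative.
-/

open Real Set

/-- The function `g` in nats: the entropy of a thermal state with mean photon number `x`. -/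
noncomputable def thermalEntropy (x : ℝ) : ℝ := (x + 1) * log (x + 1) - x * log x

lemma continuous_thermalEntropy : Continuous thermalEntropy :=
  (continuous_mul_log.comp (continuous_add_const 1)).sub continuous_mul_log

lemma hasDerivAt_thermalEntropy_comp_mul {a N : ℝ} (ha : 0 ≤ a) (hN : 0 < N) :
    HasDerivAt (fun N => thermalEntropy (a * N)) (a * (log (a * N + 1) - log (a * N))) N := by
  rcases ha.eq_or_lt with rfl | ha
  · simpa [thermalEntropy] using hasDerivAt_const N (thermalEntropy 0)
  have hlin : HasDerivAt (fun N => a * N) a N := by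
    simpa using (hasDerivAt_id N).const_mul a
  have hsucc : HasDerivAt (fun N => (a * N + 1) * log (a * N + 1)) ((log (a * N + 1) + 1) * a) N :=
    (hasDerivAt_mul_log (by positivity)).comp N (hlin.add_const 1)
  have hself : HasDerivAt (fun N => a * N * log (a * N)) ((log (a * N) + 1) * a) N :=
    (hasDerivAt_mul_log (by positivity)).comp N hlin
  exact (hsucc.fun_sub hself).congr_deriv (by ring)

lemma hasDerivAt_mul_log_add_one_sub_mul_log {x : ℝ} (hx : 0 < x) :
    HasDerivAt (fun x => x * log (x + 1) - x * log x) (log (x + 1) - log x - (x + 1)⁻¹) x := by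
  have hlog : HasDerivAt (fun x => log (x + 1)) (x + 1)⁻¹ x := by
    simpa using ((hasDerivAt_id x).add_const 1).log (by positivity)
  refine (((hasDerivAt_id' x).mul hlog).fun_sub (hasDerivAt_mul_log hx.ne')).congr_deriv ?_
  field_simp
  ring

lemma monotoneOn_mul_log_add_one_sub_mul_log :
    MonotoneOn (fun x => x * log (x + 1) - x * log x) (Ici 0) := by
  refine monotoneOn_of_hasDerivWithinAt_nonneg (convex_Ici 0)
    (f' := fun x => log (x + 1) - log x - (x + 1)⁻¹) ?_ (fun x hx => ?_) (fun x hx => ?_)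
  · exact (continuousOn_id.mul ((continuous_add_const 1).continuousOn.log fun x hx => by
      simp only [mem_Ici] at hx; linarith)).sub continuous_mul_log.continuousOn
  all_goals rw [interior_Ici, mem_Ioi] at hx
  · exact (hasDerivAt_mul_log_add_one_sub_mul_log hx).hasDerivWithinAt
  · have hlog := one_sub_inv_le_log_of_pos (div_pos (by linarith : 0 < x + 1) hx)
    rw [log_div (by linarith) hx.ne', inv_div] at hlog
    have : 1 - x / (x + 1) = (x + 1)⁻¹ := by field_simp; ring
    linarith

lemma monotoneOn_thermalEntropy_comp_mul_sub {a b : ℝ} (hb : 0 ≤ b) (hba : b ≤ a) :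
    MonotoneOn (fun N => thermalEntropy (a * N) - thermalEntropy (b * N)) (Ici 0) := by
  have ha := hb.trans hba
  refine monotoneOn_of_hasDerivWithinAt_nonneg (convex_Ici 0)
    (f' := fun N => a * (log (a * N + 1) - log (a * N)) - b * (log (b * N + 1) - log (b * N)))
    ?_ (fun N hN => ?_) (fun N hN => ?_)
  · exact ((continuous_thermalEntropy.comp (continuous_const_mul a)).sub
      (continuous_thermalEntropy.comp (continuous_const_mul b))).continuousOn
  all_goals rw [interior_Ici, mem_Ioi] at hN
  · exact ((hasDerivAt_thermalEntropy_comp_mul ha hN).fun_sub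
      (hasDerivAt_thermalEntropy_comp_mul hb hN)).hasDerivWithinAt
  · have hm := monotoneOn_mul_log_add_one_sub_mul_log (mul_nonneg hb hN.le) (mul_nonneg ha hN.le)
      (mul_le_mul_of_nonneg_right hba hN.le)
    refine nonneg_of_mul_nonneg_right (a := N) ?_ hN
    linear_combination hm

/-- For η ∈ [1/2, 1], the map N_S ↦ g(η N_S) − g((1−η) N_S) is monotone
    nondecreasing on [0, ∞), where g(x) = (x+1)·log₂(x+1) − x·log₂ x
    (with g(0) = 0, which the formula gives since Real.logb 2 0 = 0). -/
theorem pureLoss_capacity_monotone (η : ℝ) (hη₁ : 1 / 2 ≤ η) (hη₂ : η ≤ 1) :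
    MonotoneOn
      (fun N : ℝ =>
        ((η * N + 1) * Real.logb 2 (η * N + 1) - η * N * Real.logb 2 (η * N))
          - (((1 - η) * N + 1) * Real.logb 2 ((1 - η) * N + 1)
              - (1 - η) * N * Real.logb 2 ((1 - η) * N)))
      (Set.Ici (0 : ℝ)) := by
  have hnats : MonotoneOn (fun N => thermalEntropy (η * N) - thermalEntropy ((1 - η) * N)) (Ici 0) :=
    monotoneOn_thermalEntropy_comp_mul_sub (by linarith) (by linarith)
  intro x hx y hy hxy
  simp only [logb, thermalEntropy] at hnats ⊢
  have := div_le_div_of_nonneg_right (hnats hx hy hxy) (log_nonneg one_le_two)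
  linear_combination this
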